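/- arXiv:2503.14638 — 6 statements merged into one kernel-verified Lean document; each statement's English description precedes it below -/
import Mathlib

section
/- The collection of connected nonempty compact subgroups of the countable power 𝕋^ℕ of the circle group is closed in the space of nonempty compact subgroups of 𝕋^ℕ with the Vietoris topology. -/
def vietoris (X : Type*) [TopologicalSpace X] :
    TopologicalSpace {K : Set X // IsCompact K ∧ K.Nonempty} :=
  TopologicalSpace.generateFrom
    ({S | ∃ U : Set X, IsOpen U ∧ S = {K | K.1 ⊆ U}} ∪
     {S | ∃ V : Set X, IsOpen V ∧ S = {K | (K.1 ∩ V).Nonempty}})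

/-- The countable power of the circle group `𝕋 = ℝ/ℤ`. -/
abbrev TorusPow : Type := ℕ → AddCircle (1 : ℝ)

/-- The space `S(𝕋^ℕ)` of nonempty compact subgroups of `𝕋^ℕ`, with the subspace
topology of the Vietoris topology. -/
def SGrp : Type :=
  {K : Set TorusPow // IsCompact K ∧ K.Nonempty ∧ ∃ H : AddSubgroup TorusPow, (H : Set TorusPow) = K}

noncomputable instance : TopologicalSpace SGrp :=
  TopologicalSpace.induced
    (fun K : SGrp => (⟨K.1, K.2.1, K.2.2.1⟩ : {K : Set TorusPow // IsCompact K ∧ K.Nonempty}))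
    (vietoris TorusPow)

/-- The collection of connected nonempty compact subgroups of `𝕋^ℕ` is closed in the
space of nonempty compact subgroups of `𝕋^ℕ` with the Vietoris topology. -/
theorem stmt_11 : IsClosed {K : SGrp | IsConnected K.1} := by
  rw [← isOpen_compl_iff, isOpen_iff_forall_mem_open]
  intro K hK
  have hne : K.1.Nonempty := K.2.2.1
  have hcomp : IsCompact K.1 := K.2.1
  have hnp : ¬ IsPreconnected K.1 := fun h => hK ⟨hne, h⟩
  rw [IsPreconnected] at hnp
  push_neg at hnp
  obtain ⟨U, V, hU, hV, hcov, hKU, hKV, hdis⟩ := hnp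
  have hAeq : K.1 ∩ U = K.1 \ V := by
    apply Set.Subset.antisymm
    · rintro x ⟨hx, hxU⟩
      refine ⟨hx, fun hxV => ?_⟩
      have : x ∈ K.1 ∩ (U ∩ V) := ⟨hx, hxU, hxV⟩
      rw [hdis] at this; exact this
    · rintro x ⟨hx, hxV⟩
      exact ⟨hx, (hcov hx).resolve_right hxV⟩
  have hBeq : K.1 ∩ V = K.1 \ U := by
    apply Set.Subset.antisymm
    · rintro x ⟨hx, hxV⟩
      refine ⟨hx, fun hxU => ?_⟩
      have : x ∈ K.1 ∩ (U ∩ V) := ⟨hx, hxU, hxV⟩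
      rw [hdis] at this; exact this
    · rintro x ⟨hx, hxU⟩
      exact ⟨hx, (hcov hx).resolve_left hxU⟩
  have hA : IsCompact (K.1 ∩ U) := hAeq ▸ hcomp.diff hV
  have hB : IsCompact (K.1 ∩ V) := hBeq ▸ hcomp.diff hU
  have hABdis : Disjoint (K.1 ∩ U) (K.1 ∩ V) := by
    rw [Set.disjoint_iff_inter_eq_empty]
    rw [← hdis]; ext x
    constructor
    · rintro ⟨⟨hx, hxU⟩, ⟨_, hxV⟩⟩; exact ⟨hx, hxU, hxV⟩
    · rintro ⟨hx, hxU, hxV⟩; exact ⟨⟨hx, hxU⟩, ⟨hx, hxV⟩⟩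
  obtain ⟨U', V', hU', hV', hAU', hBV', hUV'⟩ :=
    SeparatedNhds.of_isCompact_isCompact hA hB hABdis
  -- the Vietoris open set
  set f : SGrp → {K : Set TorusPow // IsCompact K ∧ K.Nonempty} :=
    fun K => ⟨K.1, K.2.1, K.2.2.1⟩ with hf
  set W' : Set {K : Set TorusPow // IsCompact K ∧ K.Nonempty} :=
    {L | L.1 ⊆ U' ∪ V'} ∩ ({L | (L.1 ∩ U').Nonempty} ∩ {L | (L.1 ∩ V').Nonempty}) with hW'
  have hW'open : (vietoris TorusPow).IsOpen W' := by
    show TopologicalSpace.GenerateOpen _ W'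
    apply TopologicalSpace.GenerateOpen.inter
    · exact TopologicalSpace.GenerateOpen.basic _ (Or.inl ⟨U' ∪ V', hU'.union hV', rfl⟩)
    · apply TopologicalSpace.GenerateOpen.inter
      · exact TopologicalSpace.GenerateOpen.basic _ (Or.inr ⟨U', hU', rfl⟩)
      · exact TopologicalSpace.GenerateOpen.basic _ (Or.inr ⟨V', hV', rfl⟩)
  refine ⟨f ⁻¹' W', ?_, ?_, ?_⟩
  · -- contained in complement
    rintro L ⟨hLsub, hLU', hLV'⟩
    intro hLconn
    have hp := hLconn.2 U' V' hU' hV' hLsub hLU' hLV'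
    obtain ⟨x, _, hxU', hxV'⟩ := hp
    exact (Set.disjoint_left.mp hUV' hxU') hxV'
  · -- open
    exact ⟨W', hW'open, rfl⟩
  · -- K ∈ W
    refine ⟨?_, ?_, ?_⟩
    · intro x hx
      rcases hcov hx with hxU | hxV
      · exact Or.inl (hAU' ⟨hx, hxU⟩)
      · exact Or.inr (hBV' ⟨hx, hxV⟩)
    · obtain ⟨x, hx⟩ := hKU
      exact ⟨x, hx.1, hAU' hx⟩
    · obtain ⟨x, hx⟩ := hKV
      exact ⟨x, hx.1, hBV' hx⟩
end

section
/- The map Φ : G → M, sending a group operation G on ℕ to the kernel of the marking homomorphism x_i ↦ i, is a topological embedding (a homeomorphism onto its image). -/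
/-- `G : ℕ × ℕ → ℕ` is a group operation on `ℕ`. -/
def IsGroupOp (G : ℕ × ℕ → ℕ) : Prop :=
  (∀ a b c, G (G (a, b), c) = G (a, G (b, c))) ∧
  ∃ e, (∀ a, G (e, a) = a ∧ G (a, e) = a) ∧ ∀ a, ∃ b, G (a, b) = e ∧ G (b, a) = e

/-- A copy of `ℕ` used as the carrier of the group `(ℕ, G)` associated to a group
operation `G` (a type synonym, so that the group structure induced by `G` does not
clash with the usual arithmetic structure of `ℕ`). -/
def NatCarrier : Type := ℕ

/-- The identification of `ℕ` with `NatCarrier`. -/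
def NatCarrier.mk : ℕ → NatCarrier := id

/-- The group `(ℕ, G)` induced by a group operation `G` on `ℕ`. -/
noncomputable def groupOfOp (G : ℕ × ℕ → ℕ) (h : IsGroupOp G) : Group NatCarrier where
  mul a b := NatCarrier.mk (G (a, b))
  one := NatCarrier.mk h.2.choose
  inv a := NatCarrier.mk (h.2.choose_spec.2 a).choose
  mul_assoc a b c := h.1 a b c
  one_mul a := (h.2.choose_spec.1 a).1
  mul_one a := (h.2.choose_spec.1 a).2
  inv_mul_cancel a := (h.2.choose_spec.2 a).choose_spec.2

/-- The space of group operations on `ℕ` (topology inherited from `ℕ^(ℕ×ℕ)`). -/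
abbrev GroupOpSpace : Type := {G : ℕ × ℕ → ℕ // IsGroupOp G}

/-- The kernel of the marking homomorphism `F_∞ → (ℕ, G)`, `x_i ↦ i`. -/
noncomputable def markingKer (G : ℕ × ℕ → ℕ) (h : IsGroupOp G) : Subgroup (FreeGroup ℕ) := by
  letI := groupOfOp G h
  exact (FreeGroup.lift fun i => NatCarrier.mk i).ker

lemma markingKer_normal (G : ℕ × ℕ → ℕ) (h : IsGroupOp G) : (markingKer G h).Normal := by
  letI := groupOfOp G h
  exact MonoidHom.normal_ker _

def charSet {α : Type*} (χ : α → Bool) : Set α := {x | χ x = true}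

/-- `χ` codes a normal subgroup. -/
def IsNormalSubgroupChar {α : Type*} [Group α] (χ : α → Bool) : Prop :=
  ∃ H : Subgroup α, H.Normal ∧ (H : Set α) = charSet χ

/-- The space of marked groups: normal subgroups of `F_∞` as a subspace of `2^{F_∞}`. -/
abbrev MarkedSpace : Type := {χ : FreeGroup ℕ → Bool // IsNormalSubgroupChar χ}

/-- `F_∞ ⧸ H` is isomorphic to the group `(ℕ, G)`. -/
def QuotIsoOp (H : Subgroup (FreeGroup ℕ)) (hn : H.Normal)
    (G : ℕ × ℕ → ℕ) (hG : IsGroupOp G) : Prop := by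
  haveI := hn
  letI := groupOfOp G hG
  exact Nonempty ((FreeGroup ℕ ⧸ H) ≃* NatCarrier)

open scoped Classical in
/-- `Φ : G → M` as a map into `2^{F_∞}`-coded normal subgroups. -/
noncomputable def PhiChar (G : GroupOpSpace) : MarkedSpace :=
  ⟨fun w => decide (w ∈ markingKer G.1 G.2),
    ⟨markingKer G.1 G.2, markingKer_normal G.1 G.2, by
      ext w; simp [charSet]⟩⟩

/-!
Membership of a word `w` in `ker φ_G` is decided by finitely many values of `G`: evaluate `w`
letter by letter, expressing a letter `x_a⁻¹` through the equation `G (a, x) = z` instead of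
through the inverse of `a`. Hence `Φ` is locally constant in each coordinate, i.e. continuous.
Conversely `G (a, b) = c` holds iff `x_a x_b x_c⁻¹ ∈ Φ(G)`, so every coordinate of `G` is
read off continuously from `Φ(G)` and `Φ` is inducing; the space of operations is Hausdorff,
so `Φ` is an embedding.
-/

open Topology Filter

section EvalWord

variable {α : Type*}

/-- `EvalWord G l y x`: multiplying `y` on the left by the word `l`, evaluated in `(α, G)`,
gives `x`. -/
inductive EvalWord (G : α × α → α) : List (α × Bool) → α → α → Prop
  | nil (y : α) : EvalWord G [] y y
  | cons_true {a : α} {l : List (α × Bool)} {y z x : α} :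
      EvalWord G l y z → G (a, z) = x → EvalWord G ((a, true) :: l) y x
  | cons_false {a : α} {l : List (α × Bool)} {y z x : α} :
      EvalWord G l y z → G (a, x) = z → EvalWord G ((a, false) :: l) y x

theorem EvalWord.eventually [TopologicalSpace α] [DiscreteTopology α] {G : α × α → α}
    {l : List (α × Bool)} {y x : α} (h : EvalWord G l y x) :
    ∀ᶠ G' in 𝓝 G, EvalWord G' l y x := by
  have eventually_apply_eq (p : α × α) : ∀ᶠ G' in 𝓝 G, G' p = G p :=
    (continuous_apply p).continuousAt.eventually_mem ((isOpen_discrete {G p}).mem_nhds rfl)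
  induction h with
  | nil y => exact .of_forall fun _ => .nil y
  | @cons_true a l y z x _ hx ih =>
    filter_upwards [ih, eventually_apply_eq (a, z)] with G' h' ha
    exact .cons_true h' (ha.trans hx)
  | @cons_false a l y z x _ hz ih =>
    filter_upwards [ih, eventually_apply_eq (a, x)] with G' h' ha
    exact .cons_false h' (ha.trans hz)

end EvalWord

theorem exists_evalWord {G : ℕ × ℕ → ℕ} (hG : IsGroupOp G) (l : List (ℕ × Bool)) (y : ℕ) :
    ∃ x, EvalWord G l y x := by
  obtain ⟨assoc, _, he, hinv⟩ := hG
  induction l with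
  | nil => exact ⟨y, .nil y⟩
  | cons p l ih =>
    obtain ⟨z, hz⟩ := ih
    obtain ⟨a, _ | _⟩ := p
    · obtain ⟨b, hab, -⟩ := hinv a
      exact ⟨G (b, z), .cons_false hz (by rw [← assoc, hab, (he z).1])⟩
    · exact ⟨G (a, z), .cons_true hz rfl⟩

theorem EvalWord.lift_mk_mul {G : ℕ × ℕ → ℕ} (hG : IsGroupOp G) {l : List (ℕ × Bool)} {y x : ℕ}
    (h : EvalWord G l y x) :
    letI := groupOfOp G hG
    FreeGroup.lift NatCarrier.mk (FreeGroup.mk l) * NatCarrier.mk y = NatCarrier.mk x := by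
  let := groupOfOp G hG
  induction h with
  | nil y => simp
  | @cons_true a l y z x _ hx ih =>
    rw [FreeGroup.lift_mk] at ih ⊢
    rw [List.map_cons, List.prod_cons, mul_assoc, ih, ← hx]
    rfl
  | @cons_false a l y z x _ hz ih =>
    rw [FreeGroup.lift_mk] at ih ⊢
    rw [List.map_cons, List.prod_cons, mul_assoc, ih]
    change (NatCarrier.mk a)⁻¹ * _ = _
    rw [inv_mul_eq_iff_eq_mul, ← hz]
    rfl

theorem mem_markingKer_iff_of_evalWord {G : ℕ × ℕ → ℕ} (hG : IsGroupOp G) {w : FreeGroup ℕ}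
    {x : ℕ} (h : EvalWord G w.toWord 0 x) : w ∈ markingKer G hG ↔ x = 0 := by
  let := groupOfOp G hG
  have hx := h.lift_mk_mul hG
  rw [FreeGroup.mk_toWord] at hx
  change FreeGroup.lift NatCarrier.mk w = 1 ↔ x = 0
  rw [← mul_eq_right (b := NatCarrier.mk 0), hx]
  exact Iff.rfl

theorem eventually_mem_markingKer_iff (w : FreeGroup ℕ) (G : GroupOpSpace) :
    ∀ᶠ G' in 𝓝 G, (w ∈ markingKer G'.1 G'.2 ↔ w ∈ markingKer G.1 G.2) := by
  obtain ⟨x, hx⟩ := exists_evalWord G.2 w.toWord 0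
  filter_upwards [continuous_subtype_val.continuousAt.eventually hx.eventually] with G' hx'
  rw [mem_markingKer_iff_of_evalWord G'.2 hx', mem_markingKer_iff_of_evalWord G.2 hx]

theorem continuous_phiChar : Continuous PhiChar := by
  refine .subtype_mk (continuous_pi fun w => continuous_iff_continuousAt.2 fun G => ?_) _
  rw [ContinuousAt, nhds_discrete Bool, tendsto_pure]
  filter_upwards [eventually_mem_markingKer_iff w G] with G' hG'
  exact decide_eq_decide.2 hG'

def mulRelator (a b c : ℕ) : FreeGroup ℕ :=
  FreeGroup.of a * FreeGroup.of b * (FreeGroup.of c)⁻¹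

theorem mulRelator_mem_markingKer_iff {G : ℕ × ℕ → ℕ} (hG : IsGroupOp G) (a b c : ℕ) :
    mulRelator a b c ∈ markingKer G hG ↔ G (a, b) = c := by
  let := groupOfOp G hG
  change FreeGroup.lift NatCarrier.mk (mulRelator a b c) = 1 ↔ _
  simp only [mulRelator, map_mul, map_inv, FreeGroup.lift_apply_of, mul_inv_eq_one]
  exact Iff.rfl

theorem isInducing_decide_eq {X : Type*} [TopologicalSpace X] [DiscreteTopology X]
    [DecidableEq X] : IsInducing fun x y : X => decide (x = y) := by
  refine isInducing_iff_nhds.2 fun x =>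
    le_antisymm (continuous_of_discreteTopology.tendsto x).le_comap ?_
  rw [nhds_discrete X, le_pure_iff]
  have hx : {χ : X → Bool | χ x = true} ∈ 𝓝 fun y => decide (x = y) :=
    (isOpen_discrete {true}).preimage (continuous_apply (A := fun _ : X => Bool) x) |>.mem_nhds
      (decide_eq_true rfl)
  exact ⟨_, hx, fun _ hy => of_decide_eq_true hy⟩

/-- The map `Φ : G → M`, sending a group operation `G` on `ℕ` to the kernel of the
marking homomorphism `x_i ↦ i`, is a topological embedding. -/
theorem stmt_13 : Topology.IsEmbedding PhiChar := by
  let readTable : MarkedSpace → ℕ × ℕ → ℕ → Bool := fun χ p c => χ.1 (mulRelator p.1 p.2 c)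
  have readTable_continuous : Continuous readTable :=
    continuous_pi fun p => continuous_pi fun c =>
      (continuous_apply _).comp continuous_subtype_val
  have readTable_phiChar : readTable ∘ PhiChar =
      Pi.map (fun _ n c => decide (n = c)) ∘ Subtype.val := by
    ext G p c
    simp [readTable, PhiChar, mulRelator_mem_markingKer_iff]
  have hind : IsInducing (readTable ∘ PhiChar) := by
    rw [readTable_phiChar]
    exact (IsInducing.piMap fun _ => isInducing_decide_eq).comp IsInducing.subtypeVal
  exact (hind.of_comp continuous_phiChar readTable_continuous).isEmbedding
end

section
/- The range of Φ : G → M equals the set of normal subgroups N ⊴ F_∞ such that each coset of N in F_∞ contains exactly one of the generators x_0, x_1, …. -/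
/-- The range of `Φ : G → M` equals the set of normal subgroups `N ⊴ F_∞` such that
each coset of `N` contains exactly one of the generators `x_0, x_1, …`. -/
theorem stmt_14 (N : Subgroup (FreeGroup ℕ)) (hN : N.Normal) :
    (∃ G : GroupOpSpace, markingKer G.1 G.2 = N) ↔
      ∀ w : FreeGroup ℕ, ∃! i : ℕ, w⁻¹ * FreeGroup.of i ∈ N := by
  haveI := hN
  constructor
  · rintro ⟨⟨G, hG⟩, rfl⟩
    letI := groupOfOp G hG
    set ψ : FreeGroup ℕ →* NatCarrier := FreeGroup.lift fun i => NatCarrier.mk i with hψ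
    have hmem : ∀ v : FreeGroup ℕ, v ∈ markingKer G hG ↔ ψ v = 1 := fun v => Iff.rfl
    let toNat : NatCarrier → ℕ := id
    intro w
    refine ⟨toNat (ψ w), ?_, ?_⟩
    · show ψ (w⁻¹ * FreeGroup.of (toNat (ψ w))) = 1
      rw [map_mul, map_inv]
      have h1 : ψ (FreeGroup.of (toNat (ψ w))) = NatCarrier.mk (toNat (ψ w)) :=
        FreeGroup.lift_apply_of
      have h2 : NatCarrier.mk (toNat (ψ w)) = ψ w := rfl
      rw [h1, h2, inv_mul_cancel]
    · intro j hj
      replace hj : ψ (w⁻¹ * FreeGroup.of j) = 1 := hj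
      rw [map_mul, map_inv, FreeGroup.lift_apply_of] at hj
      have h3 : (ψ w : NatCarrier) = NatCarrier.mk j := (inv_mul_eq_one.mp hj)
      exact congrArg toNat h3.symm
  · intro hu
    classical
    have hinj : Function.Injective (fun i : ℕ => ((FreeGroup.of i : FreeGroup ℕ) : FreeGroup ℕ ⧸ N)) := by
      intro i j hij
      have h1 : (FreeGroup.of i)⁻¹ * FreeGroup.of i ∈ N := by rw [inv_mul_cancel]; exact N.one_mem
      have h2 : (FreeGroup.of i)⁻¹ * FreeGroup.of j ∈ N := QuotientGroup.eq.mp hij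
      exact (hu (FreeGroup.of i)).unique h1 h2
    have hsurj : Function.Surjective (fun i : ℕ => ((FreeGroup.of i : FreeGroup ℕ) : FreeGroup ℕ ⧸ N)) := by
      intro x
      obtain ⟨w, rfl⟩ := QuotientGroup.mk_surjective x
      obtain ⟨i, hi, -⟩ := hu w
      exact ⟨i, (QuotientGroup.eq.mpr hi).symm⟩
    let e : ℕ ≃ (FreeGroup ℕ ⧸ N) := Equiv.ofBijective _ ⟨hinj, hsurj⟩
    have he : ∀ i : ℕ, e i = ((FreeGroup.of i : FreeGroup ℕ) : FreeGroup ℕ ⧸ N) := fun i => rfl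
    let G : ℕ × ℕ → ℕ := fun p => e.symm (e p.1 * e p.2)
    have hG : IsGroupOp G := by
      refine ⟨fun a b c => ?_, e.symm 1, fun a => ⟨?_, ?_⟩, fun a => ⟨e.symm (e a)⁻¹, ?_, ?_⟩⟩
      · simp only [G, Equiv.apply_symm_apply, mul_assoc]
      · simp only [G, Equiv.apply_symm_apply, one_mul, Equiv.symm_apply_apply]
      · simp only [G, Equiv.apply_symm_apply, mul_one, Equiv.symm_apply_apply]
      · simp only [G, Equiv.apply_symm_apply, mul_inv_cancel]
      · simp only [G, Equiv.apply_symm_apply, inv_mul_cancel]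
    refine ⟨⟨G, hG⟩, ?_⟩
    letI := groupOfOp G hG
    set ψ : FreeGroup ℕ →* NatCarrier := FreeGroup.lift fun i => NatCarrier.mk i with hψ
    let φ : FreeGroup ℕ →* NatCarrier := MonoidHom.mk'
      (fun w => (e.symm ((w : FreeGroup ℕ ⧸ N)) : NatCarrier))
      (by
        intro a b
        show (e.symm ((a * b : FreeGroup ℕ) : FreeGroup ℕ ⧸ N) : ℕ)
          = G (e.symm (a : FreeGroup ℕ ⧸ N), e.symm (b : FreeGroup ℕ ⧸ N))
        simp only [G, Equiv.apply_symm_apply, QuotientGroup.mk_mul])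
    have hψφ : ψ = φ := by
      apply FreeGroup.ext_hom
      intro i
      show ψ (FreeGroup.of i) = e.symm ((FreeGroup.of i : FreeGroup ℕ) : FreeGroup ℕ ⧸ N)
      rw [hψ, FreeGroup.lift_apply_of, ← he, Equiv.symm_apply_apply]
      rfl
    have hone : (1 : NatCarrier) = (e.symm 1 : ℕ) := by
      have h1 := map_one φ
      have : φ (1 : FreeGroup ℕ) = (e.symm ((1 : FreeGroup ℕ) : FreeGroup ℕ ⧸ N) : ℕ) := rfl
      rw [this] at h1
      rw [← h1, QuotientGroup.mk_one]
    ext x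
    show ψ x = 1 ↔ x ∈ N
    rw [hψφ, hone]
    show (e.symm ((x : FreeGroup ℕ ⧸ N)) : ℕ) = e.symm 1 ↔ x ∈ N
    rw [e.symm.injective.eq_iff, QuotientGroup.eq_one_iff]
end

section
/- Let D = {N ⊴ F_∞ : F_∞/N is infinite and every coset of N contains infinitely many generators x_i}. Then D is a dense Gδ subset of the space M of normal subgroups of F_∞, and hence comeager in M. -/
/-- `D`: the set of normal subgroups `N ⊴ F_∞` such that `F_∞/N` is infinite and every
coset of `N` contains infinitely many generators `x_i`. -/
def Dset : Set MarkedSpace :=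
  {N | (∃ f : ℕ → FreeGroup ℕ, ∀ i j, i ≠ j → N.1 (f i * (f j)⁻¹) = false) ∧
    ∀ u : FreeGroup ℕ, {i : ℕ | N.1 (u⁻¹ * FreeGroup.of i) = true}.Infinite}


/-!
Both conditions defining `D` are countable intersections of open conditions on finitely many
coordinates: `F/N` is infinite iff it has `n` distinct cosets for every `n`, and a coset `uN`
contains infinitely many generators iff for every `n` it contains some `x_i` with `i ≥ n`.

For density, a basic neighbourhood of `N` prescribes membership of finitely many words, and these
involve only generators `x_i` with `i < n`. Send `x_i ↦ (x_i N, 1) ∈ F/N × ℤ` for `i < n` and let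
the remaining generators enumerate every element of this countably infinite group infinitely
often; the kernel of the resulting homomorphism lies in `D` and agrees with `N` on those words.
-/

open Set

section DistinctCosets

theorem infinite_iff_nonempty_nat_embedding {β : Type*} : Infinite β ↔ Nonempty (ℕ ↪ β) :=
  ⟨fun _ => ⟨Infinite.natEmbedding β⟩, fun ⟨e⟩ => Infinite.of_injective e e.injective⟩

theorem infinite_iff_forall_nonempty_fin_embedding {β : Type*} :
    Infinite β ↔ ∀ n, Nonempty (Fin n ↪ β) := by
  refine ⟨fun _ n => ⟨Fin.valEmbedding.trans (Infinite.natEmbedding β)⟩, fun h => ?_⟩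
  by_contra hfin
  rw [not_infinite_iff_finite] at hfin
  obtain ⟨e⟩ := h (Nat.card β + 1)
  simpa using Finite.card_le_of_embedding e

variable {G : Type*} [Group G] (H : Subgroup G)

theorem Subgroup.exists_mul_inv_notMem_iff_nonempty_embedding (ι : Type*) :
    (∃ f : ι → G, ∀ i j, i ≠ j → f i * (f j)⁻¹ ∉ H) ↔
      Nonempty (ι ↪ Quotient (QuotientGroup.rightRel H)) := by
  constructor
  · rintro ⟨f, hf⟩
    refine ⟨⟨fun i => Quotient.mk _ (f i), fun i j hij => ?_⟩⟩
    by_contra hne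
    exact hf j i (Ne.symm hne) (QuotientGroup.rightRel_apply.mp (Quotient.exact hij))
  · rintro ⟨e⟩
    refine ⟨fun i => (e i).out, fun i j hij hmem => hij (e.injective ?_)⟩
    rw [← Quotient.out_eq (e i), ← Quotient.out_eq (e j)]
    exact (Quotient.sound (QuotientGroup.rightRel_apply.mpr hmem)).symm

theorem Subgroup.exists_seq_mul_inv_notMem_iff :
    (∃ f : ℕ → G, ∀ i j, i ≠ j → f i * (f j)⁻¹ ∉ H) ↔
      ∀ n, ∃ f : Fin n → G, ∀ i j, i ≠ j → f i * (f j)⁻¹ ∉ H := by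
  simp only [exists_mul_inv_notMem_iff_nonempty_embedding, ← infinite_iff_nonempty_nat_embedding,
    ← infinite_iff_forall_nonempty_fin_embedding]

end DistinctCosets

section FiniteCoordinates

variable {α β : Type*} [TopologicalSpace β] {p : (α → β) → Prop}

theorem continuous_subtype_val_apply (a : α) : Continuous fun x : Subtype p => x.1 a :=
  (continuous_apply a).comp continuous_subtype_val

theorem isOpen_setOf_apply_eq [DiscreteTopology β] (a : α) (b : β) :
    IsOpen {x : Subtype p | x.1 a = b} :=
  (isOpen_discrete {b}).preimage (continuous_subtype_val_apply a)

theorem isOpen_setOf_restrict_mem [DiscreteTopology β] {ι : Type*} [Finite ι] (a : ι → α)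
    (s : Set (ι → β)) :
    IsOpen {x : Subtype p | (fun i => x.1 (a i)) ∈ s} :=
  (isOpen_discrete s).preimage (continuous_pi fun i => continuous_subtype_val_apply (a i))

theorem IsOpen.exists_finset_forall_eq_imp_mem {U : Set (Subtype p)} (hU : IsOpen U)
    {x : Subtype p} (hx : x ∈ U) :
    ∃ S : Finset α, ∀ y : Subtype p, (∀ a ∈ S, y.1 a = x.1 a) → y ∈ U := by
  obtain ⟨V, hV, rfl⟩ := isOpen_induced_iff.mp hU
  obtain ⟨S, u, hu, hSV⟩ := isOpen_pi_iff.mp hV _ hx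
  refine ⟨S, fun y hy => hSV fun a ha => ?_⟩
  rw [hy a ha]
  exact (hu a ha).2

end FiniteCoordinates

section FreeGroupHoms

open Subgroup FreeGroup Filter

theorem exists_forall_lt_eq_and_infinite_fibers {Q : Type*} [Countable Q] [Nonempty Q]
    (n : ℕ) (c₀ : ℕ → Q) : ∃ c : ℕ → Q, (∀ i < n, c i = c₀ i) ∧ ∀ q, {i | c i = q}.Infinite := by
  obtain ⟨s, hs⟩ := exists_surjective_nat Q
  refine ⟨fun i => if i < n then c₀ i else s (Nat.unpair i).1, fun i hi => if_pos hi, fun q => ?_⟩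
  obtain ⟨k, rfl⟩ := hs q
  have hrow : (range (Nat.pair k)).Infinite :=
    infinite_range_of_injective fun a b hab => (Nat.pair_eq_pair.mp hab).2
  refine (hrow.sdiff (finite_Iio n)).mono ?_
  rintro _ ⟨⟨m, rfl⟩, hm⟩
  simp only [mem_ofPred_eq, mem_Iio] at hm ⊢
  rw [if_neg hm, Nat.unpair_pair]

theorem FreeGroup.eventually_mem_closure_image_of_Iio (w : FreeGroup ℕ) :
    ∀ᶠ n in atTop, w ∈ closure (of '' Iio n) := by
  induction w with
  | C1 => exact .of_forall fun _ => one_mem _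
  | of i =>
    exact (eventually_gt_atTop i).mono fun _ hin => subset_closure (mem_image_of_mem _ hin)
  | inv_of i hi => exact hi.mono fun _ => inv_mem
  | mul v w hv hw => exact (hv.and hw).mono fun _ h => mul_mem h.1 h.2

theorem FreeGroup.exists_hom_eqOn_closure_and_infinite_fibers {Q : Type*} [Group Q] [Countable Q]
    (ψ : FreeGroup ℕ →* Q) (n : ℕ) : ∃ φ : FreeGroup ℕ →* Q,
      EqOn φ ψ (closure (of '' Iio n)) ∧ ∀ q, {i | φ (of i) = q}.Infinite := by
  obtain ⟨c, hc, hfib⟩ := exists_forall_lt_eq_and_infinite_fibers n (ψ ∘ of)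
  refine ⟨lift c, MonoidHom.eqOn_closure ?_, by simpa only [lift_apply_of] using hfib⟩
  rintro _ ⟨i, hi, rfl⟩
  simpa using hc i hi

end FreeGroupHoms

namespace MarkedSpace

open scoped Classical in
noncomputable def ker {Q : Type*} [Group Q] (φ : FreeGroup ℕ →* Q) : MarkedSpace :=
  ⟨fun w => decide (φ w = 1), φ.ker, φ.normal_ker, by ext w; simp [charSet]⟩

open scoped Classical in
theorem ker_apply {Q : Type*} [Group Q] (φ : FreeGroup ℕ →* Q) (w : FreeGroup ℕ) :
    (ker φ).1 w = decide (φ w = 1) :=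
  rfl

noncomputable def toSubgroup (N : MarkedSpace) : Subgroup (FreeGroup ℕ) :=
  N.2.choose

instance (N : MarkedSpace) : N.toSubgroup.Normal :=
  N.2.choose_spec.1

theorem mem_toSubgroup {N : MarkedSpace} {w : FreeGroup ℕ} :
    w ∈ N.toSubgroup ↔ N.1 w = true := by
  rw [← SetLike.mem_coe, toSubgroup, N.2.choose_spec.2]
  rfl

theorem apply_eq_false_iff {N : MarkedSpace} {w : FreeGroup ℕ} :
    N.1 w = false ↔ w ∉ N.toSubgroup := by
  simp [mem_toSubgroup]

theorem isGδ_setOf_exists_pairwise_distinct_cosets : IsGδ {N : MarkedSpace |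
    ∃ f : ℕ → FreeGroup ℕ, ∀ i j, i ≠ j → N.1 (f i * (f j)⁻¹) = false} := by
  have hopen (n : ℕ) (f : Fin n → FreeGroup ℕ) : IsOpen {N : MarkedSpace |
      (fun p : Fin n × Fin n => N.1 (f p.1 * (f p.2)⁻¹)) ∈ {b | ∀ p, p.1 ≠ p.2 → b p = false}} :=
    isOpen_setOf_restrict_mem _ _
  convert IsGδ.iInter fun n => (isOpen_iUnion (hopen n)).isGδ using 1
  ext N
  simp only [mem_ofPred_eq, mem_iInter, mem_iUnion, apply_eq_false_iff, Prod.forall]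
  exact N.toSubgroup.exists_seq_mul_inv_notMem_iff

theorem isGδ_setOf_forall_infinite_generators_in_coset : IsGδ {N : MarkedSpace |
    ∀ u : FreeGroup ℕ, {i : ℕ | N.1 (u⁻¹ * FreeGroup.of i) = true}.Infinite} := by
  have hopen (u : FreeGroup ℕ) (i : ℕ) :
      IsOpen {N : MarkedSpace | N.1 (u⁻¹ * FreeGroup.of i) = true} :=
    isOpen_setOf_apply_eq _ _
  convert IsGδ.iInter fun u => IsGδ.iInter fun n : ℕ =>
    (isOpen_iUnion fun i => isOpen_iUnion fun (_ : n ≤ i) => hopen u i).isGδ using 1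
  ext N
  simp only [mem_ofPred_eq, mem_iInter, mem_iUnion, ← Nat.frequently_atTop_iff_infinite,
    Filter.frequently_atTop, exists_prop]

theorem ker_mem_Dset {Q : Type*} [Group Q] [Infinite Q] (φ : FreeGroup ℕ →* Q)
    (hfib : ∀ q, {i | φ (FreeGroup.of i) = q}.Infinite) : ker φ ∈ Dset := by
  refine ⟨?_, fun u => (hfib (φ u)).mono fun i hi => ?_⟩
  · let e := Infinite.natEmbedding Q
    choose g hg using fun n => ((hfib (e n)).nonempty : ∃ i, φ (FreeGroup.of i) = e n)
    refine ⟨fun n => FreeGroup.of (g n), fun i j hij => ?_⟩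
    rw [ker_apply, decide_eq_false_iff_not, map_mul, map_inv, hg, hg, mul_inv_eq_one]
    exact fun h => hij (e.injective h)
  · simp [ker_apply, show φ (FreeGroup.of i) = φ u from hi]

theorem dense_Dset : Dense Dset := by
  refine dense_iff_inter_open.mpr fun U hU ⟨x, hx⟩ => ?_
  obtain ⟨S, hS⟩ := hU.exists_finset_forall_eq_imp_mem hx
  obtain ⟨n, hn⟩ := ((Filter.eventually_all_finset S).2 fun w _ =>
    FreeGroup.eventually_mem_closure_image_of_Iio w).exists
  have : Countable (FreeGroup ℕ ⧸ x.toSubgroup) := Quotient.countable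
  let ψ := (QuotientGroup.mk' x.toSubgroup).prod (1 : FreeGroup ℕ →* Multiplicative ℤ)
  obtain ⟨φ, hφψ, hfib⟩ := FreeGroup.exists_hom_eqOn_closure_and_infinite_fibers ψ n
  refine ⟨ker φ, hS _ fun w hw => ?_, ker_mem_Dset φ hfib⟩
  rw [ker_apply, hφψ (hn w hw)]
  simp [ψ, mem_toSubgroup]

end MarkedSpace

/-- `D` is a dense `Gδ` subset of the space `M` of marked groups, hence comeager. -/
theorem stmt_16 : Dense Dset ∧ IsGδ Dset ∧ Dset ∈ residual MarkedSpace := by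
  have hGδ : IsGδ Dset := MarkedSpace.isGδ_setOf_exists_pairwise_distinct_cosets.inter
    MarkedSpace.isGδ_setOf_forall_infinite_generators_in_coset
  exact ⟨MarkedSpace.dense_Dset, hGδ, residual_of_dense_Gδ hGδ MarkedSpace.dense_Dset⟩
end

section
/- The range of the map Φ : G → M (sending a group operation on ℕ to the kernel of the canonical marking x_i ↦ i) is nowhere dense in the space M of normal subgroups of F_∞. -/
/-!
A marking kernel never puts two generators in the same coset, and this closed condition has
empty interior: pulling `N` back along the endomorphism `x_(n+1) ↦ x_n` (fixing the other
generators) yields normal subgroups that identify `x_n` with `x_(n+1)` and converge to `N` as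
`n → ∞`, because each word is fixed by these endomorphisms for all large `n`.
-/

open Filter Topology

/-- Each coset of `N` contains at most one generator. -/
def SeparatesGenerators (N : MarkedSpace) : Prop :=
  ∀ a b : ℕ, a ≠ b → N.1 ((FreeGroup.of a)⁻¹ * FreeGroup.of b) = false

lemma isClosed_setOf_separatesGenerators :
    IsClosed {N : MarkedSpace | SeparatesGenerators N} := by
  simp only [SeparatesGenerators, Set.ofPred_forall]
  exact isClosed_iInter fun a => isClosed_iInter fun b => isClosed_iInter fun _ =>
    isClosed_eq ((continuous_apply _).comp continuous_subtype_val) continuous_const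

lemma inv_mul_notMem_markingKer (G : ℕ × ℕ → ℕ) (h : IsGroupOp G) {a b : ℕ} (hab : a ≠ b) :
    (FreeGroup.of a)⁻¹ * FreeGroup.of b ∉ markingKer G h := by
  let := groupOfOp G h
  intro hmem
  have hlift : (FreeGroup.lift fun i => NatCarrier.mk i)
      ((FreeGroup.of a)⁻¹ * FreeGroup.of b) = 1 := hmem
  rw [map_mul, map_inv, FreeGroup.lift_apply_of, FreeGroup.lift_apply_of, inv_mul_eq_one] at hlift
  exact hab hlift

lemma separatesGenerators_of_markingKer {N : MarkedSpace} (G : GroupOpSpace)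
    (hN : (markingKer G.1 G.2 : Set (FreeGroup ℕ)) = charSet N.1) : SeparatesGenerators N :=
  fun _ _ hab => Bool.eq_false_iff.mpr fun hmem =>
    inv_mul_notMem_markingKer G.1 G.2 hab (by rw [← SetLike.mem_coe, hN]; exact hmem)

def MarkedSpace.comap (φ : FreeGroup ℕ →* FreeGroup ℕ) (N : MarkedSpace) : MarkedSpace :=
  ⟨N.1 ∘ φ, by
    obtain ⟨H, hH, hHN⟩ := N.2
    exact ⟨H.comap φ, hH.comap φ, by rw [Subgroup.coe_comap, hHN]; rfl⟩⟩

def collapseSucc (n : ℕ) : FreeGroup ℕ →* FreeGroup ℕ :=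
  FreeGroup.lift fun k => FreeGroup.of (if k = n + 1 then n else k)

lemma collapseSucc_inv_mul (n : ℕ) :
    collapseSucc n ((FreeGroup.of n)⁻¹ * FreeGroup.of (n + 1)) = 1 := by
  simp [collapseSucc]

lemma eventually_collapseSucc_apply (w : FreeGroup ℕ) : ∀ᶠ n in atTop, collapseSucc n w = w := by
  induction w using FreeGroup.induction_on with
  | C1 => exact .of_forall fun n => map_one _
  | of k =>
    filter_upwards [eventually_ge_atTop k] with n hn
    simp [collapseSucc, show k ≠ n + 1 by omega]
  | inv_of k hk => exact hk.mono fun n hn => by rw [map_inv, hn]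
  | mul u v hu hv => filter_upwards [hu, hv] with n hun hvn; rw [map_mul, hun, hvn]

lemma tendsto_comap_collapseSucc (N : MarkedSpace) :
    Tendsto (fun n => N.comap (collapseSucc n)) atTop (𝓝 N) := by
  rw [tendsto_subtype_rng, tendsto_pi_nhds]
  exact fun w => tendsto_const_nhds.congr'
    ((eventually_collapseSucc_apply w).mono fun n hn => by simp [MarkedSpace.comap, hn])

lemma not_separatesGenerators_comap_collapseSucc (N : MarkedSpace) (n : ℕ) :
    ¬ SeparatesGenerators (N.comap (collapseSucc n)) := by
  intro h
  have hone : N.1 1 = true := by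
    obtain ⟨H, -, hHN⟩ := N.2
    exact (hHN ▸ H.one_mem : (1 : FreeGroup ℕ) ∈ charSet N.1)
  have := h n (n + 1) (by omega)
  simp [MarkedSpace.comap, collapseSucc_inv_mul, hone] at this

lemma isNowhereDense_setOf_separatesGenerators :
    IsNowhereDense {N : MarkedSpace | SeparatesGenerators N} := by
  rw [isClosed_setOf_separatesGenerators.isNowhereDense_iff, interior_eq_empty_iff_dense_compl]
  exact fun N => mem_closure_of_tendsto (tendsto_comap_collapseSucc N)
    (.of_forall (not_separatesGenerators_comap_collapseSucc N))

/-- The range of `Φ : G → M` (sending a group operation on `ℕ` to the kernel of the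
canonical marking `x_i ↦ i`) is nowhere dense in the space `M` of marked groups. -/
theorem stmt_17 :
    IsNowhereDense {N : MarkedSpace |
      ∃ G : GroupOpSpace, (markingKer G.1 G.2 : Set (FreeGroup ℕ)) = charSet N.1} :=
  isNowhereDense_setOf_separatesGenerators.mono
    fun _ ⟨G, hG⟩ => separatesGenerators_of_markingKer G hG
end

section
/- There exists a surjective, open, continuous map f : D → G, where D = {N ⊴ F_∞ : F_∞/N is infinite and every coset of N contains infinitely many generators}, such that F_∞/N ≅ (ℕ, f(N)) for every N ∈ D. -/
/-!
Write `π i` for the coset of `x_i`. Listing the first occurrences of the values of the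
surjection `π : ℕ → F_∞/N` in increasing order gives a bijection `e_N : F_∞/N ≃ ℕ`, and `f(N)`
is the group law transported along `e_N`. Each value of `f(N)` is decided by finitely many
memberships `w ∈ N`, whence continuity. For openness, `c = e_N ∘ π` is a labelling of the
generators whose values first occur in increasing order; for every group law `G`, the kernel of
`x_i ↦ c i` into `(ℕ, G)` lies in `D` and is sent to `G`, it depends continuously on `G`, and
for `G = f(N)` it is `N`. Surjectivity is the same construction, starting from any labelling with
infinite fibres made increasing in this way.
-/

open Filter Topology Classical

section FirstOccurrence

variable {α β : Type*} (c : ℕ → α)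

def IsFirstOccurrence (i : ℕ) : Prop := ∀ j < i, c j ≠ c i

noncomputable def firstIndex (a : α) : ℕ := sInf (c ⁻¹' {a})

noncomputable def occurrenceRank (a : α) : ℕ :=
  Nat.count (IsFirstOccurrence c) (firstIndex c a)

noncomputable def enumerate (n : ℕ) : α := c (Nat.nth (IsFirstOccurrence c) n)

variable {c}

lemma firstIndex_eq_of {a : α} {n : ℕ} (hn : c n = a) (hlt : ∀ j < n, c j ≠ a) :
    firstIndex c a = n :=
  le_antisymm (Nat.sInf_le hn) (not_lt.1 fun h => hlt _ h (Nat.sInf_mem (s := c ⁻¹' {a}) ⟨n, hn⟩))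

lemma apply_firstIndex (hc : c.Surjective) (a : α) : c (firstIndex c a) = a :=
  Nat.sInf_mem (hc a)

lemma isFirstOccurrence_iff {i : ℕ} : IsFirstOccurrence c i ↔ firstIndex c (c i) = i :=
  ⟨fun h => firstIndex_eq_of rfl h, fun h _ hj hji => (Nat.sInf_le hji).not_gt (h ▸ hj)⟩

lemma isFirstOccurrence_firstIndex (hc : c.Surjective) (a : α) :
    IsFirstOccurrence c (firstIndex c a) := by
  rw [isFirstOccurrence_iff, apply_firstIndex hc]

lemma infinite_setOf_isFirstOccurrence (hc : c.Surjective) [Infinite α] :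
    {i | IsFirstOccurrence c i}.Infinite :=
  Set.infinite_of_injective_forall_mem
    (fun a b h => by rw [← apply_firstIndex hc a, h, apply_firstIndex hc])
    (isFirstOccurrence_firstIndex hc)

noncomputable def firstOccurrenceEquiv (hc : c.Surjective) [Infinite α] : α ≃ ℕ where
  toFun := occurrenceRank c
  invFun := enumerate c
  left_inv a := by
    rw [enumerate, occurrenceRank, Nat.nth_count (isFirstOccurrence_firstIndex hc a),
      apply_firstIndex hc]
  right_inv n := by
    have hn := Nat.nth_mem_of_infinite (infinite_setOf_isFirstOccurrence hc) n
    rw [occurrenceRank, enumerate, isFirstOccurrence_iff.1 hn,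
      Nat.count_nth_of_infinite (infinite_setOf_isFirstOccurrence hc)]

lemma preimage_equiv_comp_singleton (g : α ≃ β) (b : β) :
    (g ∘ c) ⁻¹' {b} = c ⁻¹' {g.symm b} := by
  ext i; simp [Equiv.eq_symm_apply]

lemma occurrenceRank_equiv_comp (g : α ≃ β) (b : β) :
    occurrenceRank (g ∘ c) b = occurrenceRank c (g.symm b) := by
  have hocc : IsFirstOccurrence (g ∘ c) = IsFirstOccurrence c := by
    ext i; simp [IsFirstOccurrence]
  have hidx : firstIndex (g ∘ c) b = firstIndex c (g.symm b) := by
    rw [firstIndex, firstIndex, preimage_equiv_comp_singleton]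
  rw [occurrenceRank, occurrenceRank, hocc, hidx]

lemma occurrenceRank_firstOccurrenceEquiv_comp (hc : c.Surjective) [Infinite α] (n : ℕ) :
    occurrenceRank (firstOccurrenceEquiv hc ∘ c) n = n := by
  rw [occurrenceRank_equiv_comp]
  exact (firstOccurrenceEquiv hc).apply_symm_apply n

lemma infinite_preimage_equiv_comp (g : α ≃ β) (hfib : ∀ a, (c ⁻¹' {a}).Infinite) (b : β) :
    ((g ∘ c) ⁻¹' {b}).Infinite := by
  rw [preimage_equiv_comp_singleton]
  exact hfib _

end FirstOccurrence

section Transfer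

/-- The group `(ℕ, G)`, as a type depending on `G` so that its group structure is found by
instance search. -/
def OpGroup (_G : GroupOpSpace) : Type := NatCarrier

noncomputable instance (G : GroupOpSpace) : Group (OpGroup G) := groupOfOp G.1 G.2

def OpGroup.toNat (G : GroupOpSpace) : OpGroup G ≃ ℕ := Equiv.refl ℕ

lemma OpGroup.toNat_mul {G : GroupOpSpace} (x y : OpGroup G) :
    OpGroup.toNat G (x * y) = G.1 (OpGroup.toNat G x, OpGroup.toNat G y) := rfl

variable {Q : Type*} [Group Q]

def transferOp (e : Q ≃ ℕ) (p : ℕ × ℕ) : ℕ := e (e.symm p.1 * e.symm p.2)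

lemma isGroupOp_transferOp (e : Q ≃ ℕ) : IsGroupOp (transferOp e) :=
  ⟨fun a b c => by simp [transferOp, mul_assoc], e 1, fun a => by simp [transferOp],
    fun a => ⟨e (e.symm a)⁻¹, by simp [transferOp]⟩⟩

noncomputable def transferMulEquiv (e : Q ≃ ℕ) :
    Q ≃* OpGroup ⟨transferOp e, isGroupOp_transferOp e⟩ where
  __ := e.trans (OpGroup.toNat _).symm
  map_mul' x y := (OpGroup.toNat _).injective <| by simp [OpGroup.toNat_mul, transferOp]

lemma transferOp_mulEquiv {G : GroupOpSpace} (m : Q ≃* OpGroup G) :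
    transferOp (m.toEquiv.trans (OpGroup.toNat G)) = G.1 := by
  funext p
  simp [transferOp, OpGroup.toNat_mul]

end Transfer

section Marked

open FreeGroup

variable (H : Subgroup (FreeGroup ℕ))

def genClass (i : ℕ) : FreeGroup ℕ ⧸ H := (of i : FreeGroup ℕ)

/-- `markedOp H (a, b) = c` iff `x_{i_a} H * x_{i_b} H = x_{i_c} H`, where `i_0 < i_1 < ⋯` are
the least generator indices of the cosets of `H`. -/
noncomputable def markedOp [H.Normal] (p : ℕ × ℕ) : ℕ :=
  occurrenceRank (genClass H) (enumerate (genClass H) p.1 * enumerate (genClass H) p.2)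

lemma markedOp_eq_transferOp [H.Normal] (hH : (genClass H).Surjective)
    [Infinite (FreeGroup ℕ ⧸ H)] : markedOp H = transferOp (firstOccurrenceEquiv hH) :=
  rfl

variable {H}

lemma genClass_eq_iff {u : FreeGroup ℕ} {i : ℕ} : genClass H i = u ↔ u⁻¹ * of i ∈ H :=
  eq_comm.trans QuotientGroup.eq

lemma isFirstOccurrence_genClass_iff {i : ℕ} :
    IsFirstOccurrence (genClass H) i ↔ ∀ j < i, (of j)⁻¹ * of i ∉ H := by
  simp only [IsFirstOccurrence, genClass, ne_eq, QuotientGroup.eq]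

end Marked

noncomputable def MarkedSpace.toSubgroup_s18 (N : MarkedSpace) : Subgroup (FreeGroup ℕ) :=
  N.2.choose

instance (N : MarkedSpace) : N.toSubgroup_s18.Normal := N.2.choose_spec.1

lemma MarkedSpace.mem_toSubgroup_s18 {N : MarkedSpace} {u : FreeGroup ℕ} :
    u ∈ N.toSubgroup_s18 ↔ N.1 u = true := by
  rw [← SetLike.mem_coe, MarkedSpace.toSubgroup_s18, N.2.choose_spec.2]
  rfl

lemma MarkedSpace.toSubgroup_eq {N : MarkedSpace} {H : Subgroup (FreeGroup ℕ)}
    (hN : ∀ u, N.1 u = true ↔ u ∈ H) : N.toSubgroup_s18 = H := by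
  ext u
  rw [mem_toSubgroup_s18, hN]

noncomputable def MarkedSpace.ofSubgroup (H : Subgroup (FreeGroup ℕ)) [H.Normal] : MarkedSpace :=
  ⟨fun u => decide (u ∈ H), H, inferInstance, by ext; simp [charSet]⟩

lemma mem_Dset_iff {N : MarkedSpace} {H : Subgroup (FreeGroup ℕ)} [H.Normal]
    (hN : ∀ u, N.1 u = true ↔ u ∈ H) :
    N ∈ Dset ↔ Infinite (FreeGroup ℕ ⧸ H) ∧ ∀ q, (genClass H ⁻¹' {q}).Infinite := by
  have hne : ∀ a b : FreeGroup ℕ, N.1 (a * b⁻¹) = false ↔ (a : FreeGroup ℕ ⧸ H) ≠ b := by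
    intro a b
    rw [ne_eq, QuotientGroup.eq_iff_div_mem, div_eq_mul_inv, ← hN, Bool.not_eq_true]
  have hfib : ∀ u : FreeGroup ℕ,
      {i | N.1 (u⁻¹ * FreeGroup.of i) = true} = genClass H ⁻¹' {(u : FreeGroup ℕ ⧸ H)} := by
    intro u
    ext i
    simp [hN, genClass_eq_iff]
  have hinf : (∃ f : ℕ → FreeGroup ℕ, ∀ i j, i ≠ j → (f i : FreeGroup ℕ ⧸ H) ≠ f j) ↔
      Infinite (FreeGroup ℕ ⧸ H) := by
    refine ⟨fun ⟨f, hf⟩ => Infinite.of_injective _ fun i j h => not_imp_not.1 (hf i j) h,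
      fun _ => ?_⟩
    let g := Infinite.natEmbedding (FreeGroup ℕ ⧸ H)
    refine ⟨fun i => Function.surjInv QuotientGroup.mk_surjective (g i), fun i j hij h => hij ?_⟩
    simpa [Function.surjInv_eq QuotientGroup.mk_surjective] using h
  simp only [Dset, Set.mem_ofPred_eq, hne, hfib, hinf, QuotientGroup.mk_surjective.forall]

section LocallyConstant

open FreeGroup

variable {X : Type*} [TopologicalSpace X] {H : X → Subgroup (FreeGroup ℕ)}
  (hH : ∀ x w, ∀ᶠ y in 𝓝 x, (w ∈ H y ↔ w ∈ H x))
include hH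

lemma eventually_isFirstOccurrence_genClass_iff (x : X) (M : ℕ) :
    ∀ᶠ y in 𝓝 x, ∀ i < M,
      (IsFirstOccurrence (genClass (H y)) i ↔ IsFirstOccurrence (genClass (H x)) i) := by
  have hmem : ∀ᶠ y in 𝓝 x, ∀ i ∈ Set.Iio M, ∀ j ∈ Set.Iio i,
      ((of j)⁻¹ * of i ∈ H y ↔ (of j)⁻¹ * of i ∈ H x) :=
    (eventually_all_finite (Set.finite_Iio M)).2 fun i _ =>
      (eventually_all_finite (Set.finite_Iio i)).2 fun j _ => hH x _
  filter_upwards [hmem] with y hy i hi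
  simp only [isFirstOccurrence_genClass_iff]
  exact forall₂_congr fun j hj => not_congr (hy i hi j hj)

lemma eventually_count_isFirstOccurrence_eq (x : X) (n : ℕ) :
    ∀ᶠ y in 𝓝 x, Nat.count (IsFirstOccurrence (genClass (H y))) n =
      Nat.count (IsFirstOccurrence (genClass (H x))) n := by
  filter_upwards [eventually_isFirstOccurrence_genClass_iff hH x n] with y hy
  exact le_antisymm (Nat.count_mono_left fun i hi => (hy i hi).1)
    (Nat.count_mono_left fun i hi => (hy i hi).2)

lemma eventually_nth_isFirstOccurrence_eq (x : X)
    (hx : {i | IsFirstOccurrence (genClass (H x)) i}.Infinite) (a : ℕ) :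
    ∀ᶠ y in 𝓝 x, Nat.nth (IsFirstOccurrence (genClass (H y))) a =
      Nat.nth (IsFirstOccurrence (genClass (H x))) a := by
  set n := Nat.nth (IsFirstOccurrence (genClass (H x))) a
  filter_upwards [eventually_isFirstOccurrence_genClass_iff hH x (n + 1),
    eventually_count_isFirstOccurrence_eq hH x n] with y hocc hcount
  have hn : IsFirstOccurrence (genClass (H y)) n :=
    (hocc n n.lt_succ_self).2 (Nat.nth_mem_of_infinite hx a)
  rw [← Nat.nth_count hn, hcount, Nat.count_nth_of_infinite hx]

lemma eventually_firstIndex_genClass_eq (x : X) (hx : (genClass (H x)).Surjective)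
    (u : FreeGroup ℕ) :
    ∀ᶠ y in 𝓝 x, firstIndex (genClass (H y)) (u : FreeGroup ℕ ⧸ H y) =
      firstIndex (genClass (H x)) (u : FreeGroup ℕ ⧸ H x) := by
  set k := firstIndex (genClass (H x)) (u : FreeGroup ℕ ⧸ H x)
  have hmem : ∀ᶠ y in 𝓝 x, ∀ i ∈ Set.Iic k, (u⁻¹ * of i ∈ H y ↔ u⁻¹ * of i ∈ H x) :=
    (eventually_all_finite (Set.finite_Iic k)).2 fun i _ => hH x _
  filter_upwards [hmem] with y hy
  refine firstIndex_eq_of ?_ fun j hj => ?_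
  · rw [genClass_eq_iff, hy k (Set.mem_Iic.2 le_rfl), ← genClass_eq_iff]
    exact apply_firstIndex hx _
  · rw [ne_eq, genClass_eq_iff, hy j (Set.mem_Iic.2 hj.le), ← genClass_eq_iff]
    exact Nat.notMem_of_lt_sInf hj

lemma eventually_markedOp_eq [∀ x, (H x).Normal] (x : X) (hx : (genClass (H x)).Surjective)
    [Infinite (FreeGroup ℕ ⧸ H x)] (p : ℕ × ℕ) :
    ∀ᶠ y in 𝓝 x, markedOp (H y) p = markedOp (H x) p := by
  have hinf := infinite_setOf_isFirstOccurrence hx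
  set u : FreeGroup ℕ := of (Nat.nth (IsFirstOccurrence (genClass (H x))) p.1) *
    of (Nat.nth (IsFirstOccurrence (genClass (H x))) p.2)
  filter_upwards [eventually_nth_isFirstOccurrence_eq hH x hinf p.1,
    eventually_nth_isFirstOccurrence_eq hH x hinf p.2, eventually_firstIndex_genClass_eq hH x hx u,
    eventually_count_isFirstOccurrence_eq hH x (firstIndex (genClass (H x)) u)]
    with y h₁ h₂ hidx hcount
  change Nat.count _ (firstIndex _ ((of (Nat.nth _ p.1) * of (Nat.nth _ p.2) : FreeGroup ℕ) :
    FreeGroup ℕ ⧸ H y)) = Nat.count _ (firstIndex _ (u : FreeGroup ℕ ⧸ H x))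
  rw [h₁, h₂, hidx, hcount]

end LocallyConstant

section Labeling

open FreeGroup

lemma GroupOpSpace.eventually_apply_eq (G : GroupOpSpace) (p : ℕ × ℕ) :
    ∀ᶠ G' in 𝓝 G, G'.1 p = G.1 p :=
  ((IsLocallyConstant.iff_continuous _).2
    ((continuous_apply p).comp continuous_subtype_val)).eventually_eq G

lemma OpGroup.eventually_toNat_one (G : GroupOpSpace) :
    ∀ᶠ G' in 𝓝 G, OpGroup.toNat G' 1 = OpGroup.toNat G 1 := by
  set e := OpGroup.toNat G 1
  -- the identity of a group is its only idempotent
  filter_upwards [G.eventually_apply_eq (e, e)] with G' h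
  have hidem : (OpGroup.toNat G').symm e * (OpGroup.toNat G').symm e =
      (OpGroup.toNat G').symm e := (OpGroup.toNat G').injective <| by
    rw [OpGroup.toNat_mul, Equiv.apply_symm_apply, h, ← OpGroup.toNat_mul, mul_one]
  rw [← mul_eq_right.1 hidem]
  exact Equiv.apply_symm_apply _ _

lemma OpGroup.eventually_toNat_inv (G : GroupOpSpace) (a : ℕ) :
    ∀ᶠ G' in 𝓝 G, OpGroup.toNat G' ((OpGroup.toNat G').symm a)⁻¹ =
      OpGroup.toNat G ((OpGroup.toNat G).symm a)⁻¹ := by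
  set b := OpGroup.toNat G ((OpGroup.toNat G).symm a)⁻¹
  have hab : G.1 (a, b) = OpGroup.toNat G 1 := by
    rw [← mul_inv_cancel ((OpGroup.toNat G).symm a), OpGroup.toNat_mul, Equiv.apply_symm_apply]
  filter_upwards [OpGroup.eventually_toNat_one G, G.eventually_apply_eq (a, b)] with G' hone h
  have hinv : (OpGroup.toNat G').symm a * (OpGroup.toNat G').symm b = 1 :=
    (OpGroup.toNat G').injective <| by
      rw [OpGroup.toNat_mul, Equiv.apply_symm_apply, Equiv.apply_symm_apply, h, hab, hone]
  rw [inv_eq_of_mul_eq_one_right hinv, Equiv.apply_symm_apply]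

noncomputable def labelingHom (G : GroupOpSpace) (c : ℕ → ℕ) : FreeGroup ℕ →* OpGroup G :=
  FreeGroup.lift fun i => (OpGroup.toNat G).symm (c i)

lemma toNat_labelingHom_of {G : GroupOpSpace} {c : ℕ → ℕ} (i : ℕ) :
    OpGroup.toNat G (labelingHom G c (of i)) = c i := by
  simp [labelingHom]

lemma eventually_toNat_labelingHom_eq (G : GroupOpSpace) (c : ℕ → ℕ) (w : FreeGroup ℕ) :
    ∀ᶠ G' in 𝓝 G, OpGroup.toNat G' (labelingHom G' c w) = OpGroup.toNat G (labelingHom G c w) := by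
  induction w using FreeGroup.induction_on with
  | C1 => simpa using OpGroup.eventually_toNat_one G
  | of i => exact .of_forall fun G' => by rw [toNat_labelingHom_of, toNat_labelingHom_of]
  | inv_of i _ =>
    filter_upwards [OpGroup.eventually_toNat_inv G (c i)] with G' h
    simpa [labelingHom] using h
  | mul u v hu hv =>
    filter_upwards [hu, hv, G.eventually_apply_eq
      (OpGroup.toNat G (labelingHom G c u), OpGroup.toNat G (labelingHom G c v))] with G' hu hv h
    rw [_root_.map_mul (labelingHom G' c), _root_.map_mul (labelingHom G c), OpGroup.toNat_mul,
      OpGroup.toNat_mul, hu, hv, h]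

lemma eventually_mem_ker_labelingHom_iff (G : GroupOpSpace) (c : ℕ → ℕ) (w : FreeGroup ℕ) :
    ∀ᶠ G' in 𝓝 G, (w ∈ (labelingHom G' c).ker ↔ w ∈ (labelingHom G c).ker) := by
  filter_upwards [eventually_toNat_labelingHom_eq G c w, OpGroup.eventually_toNat_one G]
    with G' h hone
  rw [MonoidHom.mem_ker, MonoidHom.mem_ker, ← (OpGroup.toNat G').injective.eq_iff, h, hone,
    (OpGroup.toNat G).injective.eq_iff]

noncomputable def labelingPoint (G : GroupOpSpace) (c : ℕ → ℕ) : MarkedSpace :=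
  MarkedSpace.ofSubgroup (labelingHom G c).ker

lemma continuous_labelingPoint (c : ℕ → ℕ) : Continuous fun G => labelingPoint G c := by
  refine Continuous.subtype_mk (continuous_pi fun w => ?_) _
  refine ((IsLocallyConstant.iff_eventually_eq _).2 fun G => ?_).continuous
  filter_upwards [eventually_mem_ker_labelingHom_iff G c w] with G' h
  exact decide_eq_decide.2 h

variable {G : GroupOpSpace} {c : ℕ → ℕ}

lemma labelingPoint_apply_eq_true_iff (u : FreeGroup ℕ) :
    (labelingPoint G c).1 u = true ↔ u ∈ (labelingHom G c).ker := by
  simp [labelingPoint, MarkedSpace.ofSubgroup]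

lemma labelingHom_surjective (hc : c.Surjective) : Function.Surjective (labelingHom G c) := fun x =>
  let ⟨i, hi⟩ := hc (OpGroup.toNat G x)
  ⟨of i, (OpGroup.toNat G).injective (by rw [toNat_labelingHom_of, hi])⟩

noncomputable def labelingEquiv (hc : c.Surjective) : FreeGroup ℕ ⧸ (labelingHom G c).ker ≃ ℕ :=
  (QuotientGroup.quotientKerEquivOfSurjective _ (labelingHom_surjective hc)).toEquiv.trans
    (OpGroup.toNat G)

lemma genClass_ker_labelingHom (hc : c.Surjective) :
    genClass (labelingHom G c).ker = (labelingEquiv hc).symm ∘ c := by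
  funext i
  rw [Function.comp_apply, Equiv.eq_symm_apply]
  exact toNat_labelingHom_of i

lemma labelingPoint_mem_Dset (hfib : ∀ n, (c ⁻¹' {n}).Infinite) : labelingPoint G c ∈ Dset := by
  have hc : c.Surjective := fun n => (hfib n).nonempty
  rw [mem_Dset_iff labelingPoint_apply_eq_true_iff]
  refine ⟨Infinite.of_injective _ (labelingEquiv hc).symm.injective, fun q => ?_⟩
  rw [genClass_ker_labelingHom hc]
  exact infinite_preimage_equiv_comp _ hfib q

lemma markedOp_ker_labelingHom (hc : c.Surjective) (hrank : ∀ n, occurrenceRank c n = n) :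
    markedOp (labelingHom G c).ker = G.1 := by
  have hπ : (genClass (labelingHom G c).ker).Surjective := by
    rw [genClass_ker_labelingHom hc]
    exact (Equiv.surjective _).comp hc
  have : Infinite (FreeGroup ℕ ⧸ (labelingHom G c).ker) :=
    Infinite.of_injective _ (labelingEquiv hc).symm.injective
  have he : firstOccurrenceEquiv hπ = labelingEquiv hc := Equiv.ext fun q => by
    change occurrenceRank _ q = _
    rw [genClass_ker_labelingHom hc, occurrenceRank_equiv_comp, Equiv.symm_symm, hrank]
  rw [markedOp_eq_transferOp _ hπ, he]
  exact transferOp_mulEquiv _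

end Labeling

lemma mem_Dset_iff_toSubgroup {N : MarkedSpace} :
    N ∈ Dset ↔ Infinite (FreeGroup ℕ ⧸ N.toSubgroup_s18) ∧
      ∀ q, (genClass N.toSubgroup_s18 ⁻¹' {q}).Infinite :=
  mem_Dset_iff fun _ => MarkedSpace.mem_toSubgroup_s18.symm

instance (N : Dset) : Infinite (FreeGroup ℕ ⧸ N.1.toSubgroup_s18) :=
  (mem_Dset_iff_toSubgroup.1 N.2).1

lemma genClass_surjective_of_mem_Dset (N : Dset) : (genClass N.1.toSubgroup_s18).Surjective :=
  fun q => ((mem_Dset_iff_toSubgroup.1 N.2).2 q).nonempty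

noncomputable def markedEquiv (N : Dset) : FreeGroup ℕ ⧸ N.1.toSubgroup_s18 ≃ ℕ :=
  firstOccurrenceEquiv (genClass_surjective_of_mem_Dset N)

noncomputable def markedGroupOp (N : Dset) : GroupOpSpace :=
  ⟨markedOp N.1.toSubgroup_s18, isGroupOp_transferOp (markedEquiv N)⟩

noncomputable def markedMulEquiv (N : Dset) :
    FreeGroup ℕ ⧸ N.1.toSubgroup_s18 ≃* OpGroup (markedGroupOp N) :=
  transferMulEquiv (markedEquiv N)

lemma markedOp_congr {H K : Subgroup (FreeGroup ℕ)} [H.Normal] [K.Normal] (h : H = K) :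
    markedOp H = markedOp K := by
  subst h
  rfl

lemma eventually_mem_toSubgroup_iff (N : Dset) (w : FreeGroup ℕ) :
    ∀ᶠ N' in 𝓝 N, (w ∈ N'.1.toSubgroup_s18 ↔ w ∈ N.1.toSubgroup_s18) := by
  have hw : Continuous fun N' : Dset => N'.1.1 w :=
    (continuous_apply w).comp (continuous_subtype_val.comp continuous_subtype_val)
  filter_upwards [((IsLocallyConstant.iff_continuous _).2 hw).eventually_eq N] with N' h
  rw [MarkedSpace.mem_toSubgroup_s18, MarkedSpace.mem_toSubgroup_s18, h]

lemma continuous_markedGroupOp : Continuous markedGroupOp :=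
  (continuous_pi fun p => ((IsLocallyConstant.iff_eventually_eq _).2 fun N =>
    eventually_markedOp_eq eventually_mem_toSubgroup_iff N
      (genClass_surjective_of_mem_Dset N) p).continuous).subtype_mk _

lemma markedGroupOp_labelingPoint {G : GroupOpSpace} {c : ℕ → ℕ}
    (hfib : ∀ n, (c ⁻¹' {n}).Infinite) (hrank : ∀ n, occurrenceRank c n = n) :
    markedGroupOp ⟨labelingPoint G c, labelingPoint_mem_Dset hfib⟩ = G :=
  Subtype.ext <| (markedOp_congr (MarkedSpace.toSubgroup_eq labelingPoint_apply_eq_true_iff)).trans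
    (markedOp_ker_labelingHom (fun n => (hfib n).nonempty) hrank)

lemma labelingPoint_markedGroupOp (N : Dset) :
    labelingPoint (markedGroupOp N) (markedEquiv N ∘ genClass N.1.toSubgroup_s18) = N.1 := by
  have hφ : labelingHom (markedGroupOp N) (markedEquiv N ∘ genClass N.1.toSubgroup_s18) =
      (markedMulEquiv N).toMonoidHom.comp (QuotientGroup.mk' _) :=
    FreeGroup.ext_hom _ _ fun _ => by simp [labelingHom]; rfl
  refine Subtype.ext (funext fun u => Bool.eq_iff_iff.2 ?_)
  rw [labelingPoint_apply_eq_true_iff, hφ,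
    MonoidHom.ker_comp_of_injective _ _ (markedMulEquiv N).injective, QuotientGroup.ker_mk',
    MarkedSpace.mem_toSubgroup_s18]

lemma isOpenMap_markedGroupOp : IsOpenMap markedGroupOp := by
  refine IsOpenMap.of_sections fun N => ?_
  set c := markedEquiv N ∘ genClass N.1.toSubgroup_s18
  have hfib : ∀ n, (c ⁻¹' {n}).Infinite :=
    infinite_preimage_equiv_comp _ (mem_Dset_iff_toSubgroup.1 N.2).2
  exact ⟨fun G => ⟨labelingPoint G c, labelingPoint_mem_Dset hfib⟩,
    ((continuous_labelingPoint c).subtype_mk _).continuousAt,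
    Subtype.ext (labelingPoint_markedGroupOp N),
    fun _ => markedGroupOp_labelingPoint hfib (occurrenceRank_firstOccurrenceEquiv_comp _)⟩

lemma surjective_markedGroupOp : Function.Surjective markedGroupOp := by
  intro G
  set c : ℕ → ℕ := fun i => (Nat.unpair i).1
  have hfib : ∀ n, (c ⁻¹' {n}).Infinite := fun n =>
    Set.infinite_of_injective_forall_mem (f := Nat.pair n)
      (fun a b h => by simpa using congrArg (fun k => (Nat.unpair k).2) h) (fun b => by simp [c])
  have hc : c.Surjective := fun n => (hfib n).nonempty
  exact ⟨_, markedGroupOp_labelingPoint (infinite_preimage_equiv_comp _ hfib)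
    (occurrenceRank_firstOccurrenceEquiv_comp hc)⟩


/-- There is a surjective open continuous map `f : D → G` such that
`F_∞/N ≅ (ℕ, f(N))` for every `N ∈ D`. -/
theorem stmt_18 :
    ∃ f : {N : MarkedSpace // N ∈ Dset} → GroupOpSpace,
      Continuous f ∧ IsOpenMap f ∧ Function.Surjective f ∧
      ∀ (N : {N : MarkedSpace // N ∈ Dset}) (H : Subgroup (FreeGroup ℕ)) (hn : H.Normal),
        (H : Set (FreeGroup ℕ)) = charSet N.1.1 → QuotIsoOp H hn (f N).1 (f N).2 := by
  refine ⟨markedGroupOp, continuous_markedGroupOp, isOpenMap_markedGroupOp,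
    surjective_markedGroupOp, fun N H hn hH => ?_⟩
  obtain rfl : N.1.toSubgroup_s18 = H :=
    MarkedSpace.toSubgroup_eq fun u => (Set.ext_iff.1 hH u).symm
  exact ⟨markedMulEquiv N⟩
end
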